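/- arXiv:math-ph/0406042 — 4 statements merged into one kernel-verified Lean document; each statement's English description precedes it below -/
import Mathlib

section
/- The Santos polynomials satisfy the recursion S_{n+1}(q) = S_n(q) + q^{n+1} T_n(q) and T_{n+1}(q) = q^n S_n(q) + T_n(q), with initial conditions S_0(q) = 1 and T_0(q) = 0. -/
/-!
Expand every Gaussian coefficient of `S_{n+1}` and `T_{n+1}` by the second `q`-Pascal rule
`[n+1, j+1]_q = [n, j+1]_q + q^(n-j) [n, j]_q`. The first summands reassemble `S_n`, resp. `T_n`;
in the second ones the exponents combine as `2k² + (n + 1 - 2k) = (n + 1) + 2(k-1)k` and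
`2k(k+1) + (n - 2k) = n + 2k²`, which turns them into `q^(n+1) T_n`, resp. `q^n S_n`.
-/

noncomputable section

/-- The Gaussian ($q$-binomial) coefficient $\binom{n}{k}_q$, defined by the Pascal-type
recursion $\binom{n+1}{k+1}_q = q^{k+1}\binom{n}{k+1}_q + \binom{n}{k}_q$. -/
def gauss {R : Type*} [CommRing R] (q : R) : ℕ → ℕ → R
  | _, 0 => 1
  | 0, _ + 1 => 0
  | n + 1, k + 1 => q ^ (k + 1) * gauss q n (k + 1) + gauss q n k

/-- The Santos polynomial $S_n(q) = \sum_{k=0}^{\lfloor n/2\rfloor} q^{2k^2}\binom{n}{2k}_q$. -/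
def santosS {R : Type*} [CommRing R] (q : R) (n : ℕ) : R :=
  ∑ k ∈ Finset.range (n / 2 + 1), q ^ (2 * k ^ 2) * gauss q n (2 * k)

/-- The Santos polynomial
$T_n(q) = \sum_{k=0}^{\lfloor (n-1)/2\rfloor} q^{2k(k+1)}\binom{n}{2k+1}_q$. -/
def santosT {R : Type*} [CommRing R] (q : R) (n : ℕ) : R :=
  ∑ k ∈ Finset.range ((n - 1) / 2 + 1), q ^ (2 * k * (k + 1)) * gauss q n (2 * k + 1)

section Gauss

variable {R : Type*} [CommRing R] (q : R)

@[simp]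
lemma gauss_zero_right (n : ℕ) : gauss q n 0 = 1 := by
  cases n <;> rfl

@[simp]
lemma gauss_zero_succ (k : ℕ) : gauss q 0 (k + 1) = 0 := rfl

lemma gauss_succ_succ (n k : ℕ) :
    gauss q (n + 1) (k + 1) = q ^ (k + 1) * gauss q n (k + 1) + gauss q n k := rfl

lemma gauss_eq_zero_of_lt : ∀ {n k : ℕ}, n < k → gauss q n k = 0
  | 0, _ + 1, _ => rfl
  | n + 1, k + 1, h => by
    rw [gauss_succ_succ, gauss_eq_zero_of_lt (by omega : n < k + 1),
      gauss_eq_zero_of_lt (by omega : n < k), mul_zero, add_zero]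

/-- The second `q`-Pascal rule `[n+1, k+1] = [n, k+1] + q^(n-k) [n, k]`, multiplied by `q^k`
so that no truncated subtraction occurs. -/
lemma pow_mul_gauss_succ_succ (n k : ℕ) :
    q ^ k * gauss q (n + 1) (k + 1) = q ^ k * gauss q n (k + 1) + q ^ n * gauss q n k := by
  induction n generalizing k with
  | zero => cases k <;> simp [gauss_succ_succ]
  | succ n ih =>
    cases k with
    | zero =>
      linear_combination gauss_succ_succ q (n + 1) 0 + q * ih 0 - gauss_succ_succ q n 0
        + (1 - q ^ (n + 1)) * (gauss_zero_right q (n + 1) - gauss_zero_right q n)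
    | succ k =>
      linear_combination q ^ (k + 1) * gauss_succ_succ q (n + 1) (k + 1)
        + q ^ (k + 2) * ih (k + 1) + q * ih k - q ^ (n + 1) * gauss_succ_succ q n k
        - q ^ (k + 1) * gauss_succ_succ q n (k + 1)

end Gauss

section Santos

variable {R : Type*} [CommRing R] (q : R)

lemma santosS_eq_sum_range {n M : ℕ} (h : n / 2 < M) :
    santosS q n = ∑ k ∈ Finset.range M, q ^ (2 * k ^ 2) * gauss q n (2 * k) := by
  refine Finset.sum_subset (Finset.range_subset_range.2 h) fun k _ hk => ?_
  rw [Finset.mem_range, not_lt] at hk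
  rw [gauss_eq_zero_of_lt q (by omega), mul_zero]

lemma santosT_eq_sum_range {n M : ℕ} (h : (n - 1) / 2 < M) :
    santosT q n = ∑ k ∈ Finset.range M, q ^ (2 * k * (k + 1)) * gauss q n (2 * k + 1) := by
  refine Finset.sum_subset (Finset.range_subset_range.2 h) fun k _ hk => ?_
  rw [Finset.mem_range, not_lt] at hk
  rw [gauss_eq_zero_of_lt q (by omega), mul_zero]

lemma santosS_zero : santosS q 0 = 1 := by
  simp [santosS]

lemma santosT_zero : santosT q 0 = 0 := by
  simp [santosT]

lemma santosS_succ (n : ℕ) : santosS q (n + 1) = santosS q n + q ^ (n + 1) * santosT q n := by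
  have term (k : ℕ) : q ^ (2 * (k + 1) ^ 2) * gauss q (n + 1) (2 * (k + 1)) =
      q ^ (2 * (k + 1) ^ 2) * gauss q n (2 * (k + 1)) +
        q ^ (n + 1) * (q ^ (2 * k * (k + 1)) * gauss q n (2 * k + 1)) := by
    have hpow : q ^ (2 * (k + 1) ^ 2) = q ^ (2 * k * (k + 1) + 1) * q ^ (2 * k + 1) := by
      rw [← pow_add]; ring_nf
    rw [hpow, mul_assoc, show 2 * (k + 1) = 2 * k + 1 + 1 by ring,
      pow_mul_gauss_succ_succ]
    ring
  rw [santosS_eq_sum_range q (by omega : (n + 1) / 2 < n + 2), Finset.sum_range_succ',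
    Finset.sum_congr rfl fun k _ => term k, Finset.sum_add_distrib, ← Finset.mul_sum,
    santosS_eq_sum_range q (by omega : n / 2 < n + 2), Finset.sum_range_succ' _ (n + 1),
    santosT_eq_sum_range q (by omega : (n - 1) / 2 < n + 1)]
  simp only [mul_zero, gauss_zero_right]
  ring

lemma santosT_succ (n : ℕ) : santosT q (n + 1) = q ^ n * santosS q n + santosT q n := by
  have term (k : ℕ) : q ^ (2 * k * (k + 1)) * gauss q (n + 1) (2 * k + 1) =
      q ^ n * (q ^ (2 * k ^ 2) * gauss q n (2 * k)) +
        q ^ (2 * k * (k + 1)) * gauss q n (2 * k + 1) := by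
    have hpow : q ^ (2 * k * (k + 1)) = q ^ (2 * k ^ 2) * q ^ (2 * k) := by
      rw [← pow_add]; ring_nf
    rw [hpow, mul_assoc, pow_mul_gauss_succ_succ]
    ring
  rw [santosT_eq_sum_range q (by omega : (n + 1 - 1) / 2 < n + 1),
    Finset.sum_congr rfl fun k _ => term k, Finset.sum_add_distrib, ← Finset.mul_sum,
    santosS_eq_sum_range q (by omega : n / 2 < n + 1),
    santosT_eq_sum_range q (by omega : (n - 1) / 2 < n + 1)]

end Santos

/-- The Santos polynomials satisfy $S_{n+1} = S_n + q^{n+1} T_n$, $T_{n+1} = q^n S_n + T_n$,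
with $S_0 = 1$, $T_0 = 0$. -/
theorem santos_recursion {R : Type*} [CommRing R] (q : R) (n : ℕ) :
    santosS q (n + 1) = santosS q n + q ^ (n + 1) * santosT q n ∧
    santosT q (n + 1) = q ^ n * santosS q n + santosT q n ∧
    santosS q 0 = 1 ∧ santosT q 0 = 0 :=
  ⟨santosS_succ q n, santosT_succ q n, santosS_zero q, santosT_zero q⟩
end
end

section
/- The Euler identity holds: \sum_{n=0}^{\infty} \frac{q^{n(n-1)/2}}{(q;q)_n} z^n = (-z;q)_{\infty} as formal power series. -/
noncomputable section

/-- The product (coefficientwise) topology on formal power series. -/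
instance powerSeriesTopology {R : Type*} [Semiring R] [TopologicalSpace R] :
    TopologicalSpace (PowerSeries R) :=
  TopologicalSpace.induced (fun f (n : ℕ) => (PowerSeries.coeff (R := R) n) f) Pi.topologicalSpace

/-- The $q$-Pochhammer symbol $(a;q)_n = \prod_{j=1}^{n}(1 - a q^{j-1})$. -/
def qPoch {R : Type*} [CommRing R] (a q : R) (n : ℕ) : R :=
  ∏ k ∈ Finset.range n, (1 - a * q ^ k)

/-- Formal power series in `z` (outer variable) over formal power series in `q`
(inner variable); i.e. formal power series in `q` and `z`. -/
abbrev R2 : Type := PowerSeries (PowerSeries ℚ)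

/-- The variable `z`. -/
def Z : R2 := PowerSeries.X

/-!
With `eₙ = q^{n(n-1)/2} / (q;q)ₙ` one has `(1 - qⁿ) eₙ = q^{n-1} e_{n-1}`, so `G(z) = ∑ eₙ zⁿ`
satisfies `G(z) = (1 + z) G(qz)`. The partial products `P_N(z) = ∏_{k<N} (1 + z qᵏ)` obey the same
recursion `P_{N+1}(z) = (1 + z) P_N(qz)`, so `P_N - G`, which has no constant term in `z`, gains a
factor `q` at every step: `qᴺ z ∣ P_N - G`. A finite product containing the first `N` factors is
`≡ P_N mod qᴺ`, hence the products converge to `G` coefficientwise.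
-/

open Filter Finset PowerSeries Topology

namespace PowerSeries

section Topology

variable {R : Type*} [Semiring R] [TopologicalSpace R]

theorem tendsto_iff_forall_coeff_tendsto {ι : Type*} {l : Filter ι} {F : ι → R⟦X⟧} {g : R⟦X⟧} :
    Tendsto F l (𝓝 g) ↔ ∀ n, Tendsto (fun i => coeff n (F i)) l (𝓝 (coeff n g)) := by
  rw [nhds_induced, tendsto_comap_iff, tendsto_pi_nhds]
  rfl

theorem hasSum_iff_forall_hasSum_coeff {ι : Type*} {f : ι → R⟦X⟧} {g : R⟦X⟧} :
    HasSum f g ↔ ∀ n, HasSum (fun i => coeff n (f i)) (coeff n g) := by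
  simp only [HasSum, tendsto_iff_forall_coeff_tendsto, map_sum]

instance [T2Space R] : T2Space R⟦X⟧ :=
  T2Space.of_injective_continuous (fun _ _ h => ext (congrFun h)) continuous_induced_dom

end Topology

theorem tendsto_of_forall_eventually_C_X_pow_dvd {R : Type*} [CommRing R] [TopologicalSpace R]
    {ι : Type*} {l : Filter ι} {F : ι → R⟦X⟧⟦X⟧} {g : R⟦X⟧⟦X⟧}
    (h : ∀ N, ∀ᶠ i in l, C (X ^ N : R⟦X⟧) ∣ F i - g) : Tendsto F l (𝓝 g) := by
  refine tendsto_iff_forall_coeff_tendsto.2 fun m => tendsto_iff_forall_coeff_tendsto.2 fun j => ?_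
  refine tendsto_const_nhds.congr' ?_
  filter_upwards [h (j + 1)] with i ⟨d, hd⟩
  have hdvd : X ^ (j + 1) ∣ coeff m (F i) - coeff m g :=
    ⟨coeff m d, by rw [← map_sub, hd, coeff_C_mul]⟩
  have hj := X_pow_dvd_iff.1 hdvd j (lt_add_one j)
  rw [map_sub, sub_eq_zero] at hj
  exact hj.symm

theorem rescale_C {R : Type*} [CommSemiring R] (a b : R) : rescale a (C b) = C b := by
  ext n
  rcases n with _ | n <;> simp [coeff_rescale, coeff_C]

end PowerSeries

theorem dvd_prod_sub_one {R ι : Type*} [CommRing R] {d : R} {s : Finset ι} {g : ι → R}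
    (h : ∀ i ∈ s, d ∣ g i - 1) : d ∣ ∏ i ∈ s, g i - 1 := by
  simp only [← Ideal.mem_span_singleton, ← Ideal.Quotient.eq, map_prod, map_one] at h ⊢
  exact prod_eq_one h

section Euler

variable (K : Type*) [Field K]

def eulerCoeff (n : ℕ) : K⟦X⟧ := X ^ (n * (n - 1) / 2) * (qPoch X X n)⁻¹

def eulerSeries : K⟦X⟧⟦X⟧ := mk (eulerCoeff K)

def eulerProd (N : ℕ) : K⟦X⟧⟦X⟧ := ∏ k ∈ range N, (1 + C (X ^ k) * X)

theorem eulerCoeff_succ (n : ℕ) :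
    eulerCoeff K (n + 1) = X ^ (n + 1) * eulerCoeff K (n + 1) + X ^ n * eulerCoeff K n := by
  have hw : (1 - X ^ (n + 1) : K⟦X⟧)⁻¹ * (1 - X ^ (n + 1)) = 1 :=
    PowerSeries.inv_mul_cancel _ (by simp)
  have hq : qPoch (X : K⟦X⟧) X (n + 1) = qPoch X X n * (1 - X ^ (n + 1)) := by
    rw [qPoch, prod_range_succ, pow_succ']
    rfl
  simp only [eulerCoeff, hq, PowerSeries.mul_inv_rev, Nat.triangle_succ]
  linear_combination (X ^ (n * (n - 1) / 2 + n) * (qPoch (X : K⟦X⟧) X n)⁻¹) * hw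

theorem eulerSeries_eq_one_add_X_mul_rescale :
    eulerSeries K = (1 + X) * rescale X (eulerSeries K) := by
  ext (_ | n) : 1
  · rw [add_mul, one_mul, map_add, coeff_zero_X_mul, coeff_rescale, pow_zero, one_mul, add_zero]
  · rw [add_mul, one_mul, map_add, coeff_succ_X_mul, coeff_rescale, coeff_rescale]
    simpa only [eulerSeries, coeff_mk] using eulerCoeff_succ K n

theorem eulerProd_succ (N : ℕ) : eulerProd K (N + 1) = (1 + X) * rescale X (eulerProd K N) := by
  simp only [eulerProd, prod_range_succ', map_prod, map_add, map_one, map_mul, rescale_C, rescale_X]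
  simp [mul_comm, pow_succ, mul_assoc]

theorem C_X_pow_mul_X_dvd_eulerProd_sub (N : ℕ) :
    C (X ^ N) * X ∣ eulerProd K N - eulerSeries K := by
  induction N with
  | zero => simp [X_dvd_iff, eulerProd, eulerSeries, eulerCoeff, qPoch]
  | succ N ih =>
    obtain ⟨h, hh⟩ := ih
    refine ⟨(1 + X) * rescale X h, ?_⟩
    rw [eulerProd_succ, eulerSeries_eq_one_add_X_mul_rescale K, ← mul_sub, ← map_sub, hh]
    simp only [map_mul, rescale_C, rescale_X, pow_succ]
    ring

theorem C_X_pow_dvd_prod_sub_eulerProd {N : ℕ} {s : Finset ℕ} (hs : range N ⊆ s) :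
    C (X ^ N) ∣ ∏ k ∈ s, (1 + C (X ^ k) * X) - eulerProd K N := by
  rw [eulerProd, ← prod_sdiff hs, ← sub_one_mul]
  refine dvd_mul_of_dvd_left (dvd_prod_sub_one fun k hk => ?_) _
  have hNk : N ≤ k := by simpa using (mem_sdiff.1 hk).2
  rw [add_sub_cancel_left]
  exact dvd_mul_of_dvd_left (map_dvd C (pow_dvd_pow X hNk)) _

theorem hasSum_eulerSeries [TopologicalSpace K] :
    HasSum (fun n => C (eulerCoeff K n) * X ^ n) (eulerSeries K) := by
  refine hasSum_iff_forall_hasSum_coeff.2 fun m => ?_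
  simp only [coeff_C_mul_X_pow, eulerSeries, coeff_mk]
  simpa using hasSum_single (f := fun n => if m = n then eulerCoeff K n else 0) m
    fun n hn => if_neg (Ne.symm hn)

theorem hasProd_eulerSeries [TopologicalSpace K] :
    HasProd (fun k => 1 + C (X ^ k : K⟦X⟧) * X) (eulerSeries K) :=
  tendsto_of_forall_eventually_C_X_pow_dvd fun N => (eventually_ge_atTop (range N)).mono
    fun _ hs => by
      have h := (C_X_pow_dvd_prod_sub_eulerProd K hs).add
        ((dvd_mul_right _ _).trans (C_X_pow_mul_X_dvd_eulerProd_sub K N))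
      rwa [sub_add_sub_cancel] at h

end Euler

/-- The Euler identity
$\sum_{n\ge 0} \frac{q^{n(n-1)/2}}{(q;q)_n} z^n = (-z;q)_\infty = \prod_{k\ge 0}(1+zq^k)$,
as formal power series in `q` and `z`. -/
theorem euler_identity :
    ∑' n : ℕ,
        PowerSeries.C (R := PowerSeries ℚ)
          ((PowerSeries.X : PowerSeries ℚ) ^ (n * (n - 1) / 2) *
            (qPoch (PowerSeries.X : PowerSeries ℚ) PowerSeries.X n)⁻¹) * Z ^ n =
      ∏' k : ℕ,
        (1 + PowerSeries.C (R := PowerSeries ℚ) ((PowerSeries.X : PowerSeries ℚ) ^ k) * Z) :=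
  (hasSum_eulerSeries ℚ).tsum_eq.trans (hasProd_eulerSeries ℚ).tprod_eq.symm
end
end

section
/- The generating function identity sinh(3x)·sinh(8x)/sinh(12x) = (1/2) \sum_{n=0}^{\infty} χ₂₄⁽¹⁾(n) e^{-nx} holds for all real x > 0. -/
/-!
Since `χ₂₄⁽¹⁾` has period 24, splitting off its first period gives `S = P(q) + q²⁴ S` for
`S = ∑ χ₂₄⁽¹⁾(n) qⁿ`, so `S = P(q) / (1 - q²⁴)` with `P(q) = q - q⁷ - q¹⁷ + q²³`.
With `q = e^{-x}`, multiplying numerator and denominator of `2 sinh(3x) sinh(8x) / sinh(12x)`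
by `q¹²` gives the same rational function of `q`.
-/

/-- The period-24 function `χ₂₄⁽¹⁾`: value 1 at `n ≡ 1, 23`, `-1` at
`n ≡ 7, 17 (mod 24)`, `0` otherwise. -/
def chi1 (n : ℕ) : ℤ :=
  if n % 24 = 1 ∨ n % 24 = 23 then 1 else if n % 24 = 7 ∨ n % 24 = 17 then -1 else 0

open Finset Function Real

section PeriodicPowerSeries

variable {𝕜 : Type*} [NormedField 𝕜] [CompleteSpace 𝕜] {f : ℕ → 𝕜} {N : ℕ} {q : 𝕜}

theorem Function.Periodic.summable_mul_pow (hf : Periodic f N) (hN : 0 < N) (hq : ‖q‖ < 1) :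
    Summable fun n ↦ f n * q ^ n := by
  refine Summable.of_norm_bounded
    ((summable_geometric_of_lt_one (norm_nonneg q) hq).mul_left (∑ r ∈ range N, ‖f r‖))
    fun n ↦ ?_
  rw [norm_mul, norm_pow, ← hf.map_mod_nat n]
  gcongr
  exact single_le_sum (fun r _ ↦ norm_nonneg (f r)) (mem_range.2 (Nat.mod_lt n hN))

theorem Function.Periodic.tsum_mul_pow (hf : Periodic f N) (hN : 0 < N) (hq : ‖q‖ < 1) :
    ∑' n, f n * q ^ n = (∑ r ∈ range N, f r * q ^ r) / (1 - q ^ N) := by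
  have hqN : 1 - q ^ N ≠ 0 := by
    refine sub_ne_zero.2 fun h ↦ ?_
    have h1 := pow_lt_one₀ (norm_nonneg q) hq hN.ne'
    rw [← norm_pow, ← h, norm_one] at h1
    exact h1.false
  have hsplit := (hf.summable_mul_pow hN hq).sum_add_tsum_nat_add N
  simp only [hf _, pow_add, ← mul_assoc, tsum_mul_right] at hsplit
  rw [eq_div_iff hqN]
  linear_combination -hsplit

end PeriodicPowerSeries

theorem chi1_periodic : Periodic chi1 24 := fun n ↦ by
  simp only [chi1, Nat.add_mod_right]

theorem sum_range_chi1_mul_pow {R : Type*} [CommRing R] (q : R) :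
    ∑ r ∈ range 24, (chi1 r : R) * q ^ r = q - q ^ 7 - q ^ 17 + q ^ 23 := by
  norm_num [sum_range_succ, chi1]
  ring

theorem Real.sinh_nat_mul (x : ℝ) (k : ℕ) :
    sinh (k * x) = (exp x ^ k - (exp x ^ k)⁻¹) / 2 := by
  rw [sinh_eq, ← exp_nat_mul, exp_neg]

/-- `sinh(3x)·sinh(8x)/sinh(12x) = (1/2) ∑_{n≥0} χ₂₄⁽¹⁾(n) e^{-nx}` for all real `x > 0`. -/
theorem sinh_gen_fun_chi1 (x : ℝ) (hx : 0 < x) :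
    Real.sinh (3 * x) * Real.sinh (8 * x) / Real.sinh (12 * x) =
      (1 / 2) * ∑' n : ℕ, (chi1 n : ℝ) * Real.exp (-(n : ℝ) * x) := by
  have hexp (n : ℕ) : exp (-(n : ℝ) * x) = (exp x)⁻¹ ^ n := by
    rw [← exp_neg, ← exp_nat_mul]
    ring_nf
  have hq : ‖(exp x)⁻¹‖ < 1 := by
    rw [norm_inv, norm_of_nonneg (exp_nonneg x)]
    exact inv_lt_one_of_one_lt₀ (one_lt_exp_iff.2 hx)
  simp only [hexp]
  rw [Periodic.tsum_mul_pow (f := fun n ↦ (chi1 n : ℝ)) (chi1_periodic.comp _) (by norm_num) hq,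
    sum_range_chi1_mul_pow]
  have h3 := sinh_nat_mul x 3
  have h8 := sinh_nat_mul x 8
  have h12 := sinh_nat_mul x 12
  simp only [Nat.cast_ofNat] at h3 h8 h12
  rw [h3, h8, h12]
  -- both sides are the same rational function of `exp x`, and at its poles both are junk `0`
  field_simp
  ring
end

section
/- The functions H^{(1,m)}_{3,5} satisfy the q-difference equations: H^{(1,4)}_{3,5}(x) = 1 − q² x³ − q⁴ x⁵ H^{(1,1)}_{3,5}(qx), H^{(1,3)}_{3,5}(x) = 1 − q³ x⁵ − q⁴ x⁶ H^{(1,2)}_{3,5}(qx), H^{(1,2)}_{3,5}(x) = 1 − q² x⁵ − q⁶ x⁹ H^{(1,3)}_{3,5}(qx), and H^{(1,1)}_{3,5}(x) = 1 − q x³ − q⁸ x¹⁰ H^{(1,4)}_{3,5}(qx). -/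
/-!
Only the summand with `k = 2n + d`, `d = |5 - 3m|`, contributes to the coefficient of `xⁿ` in
`H^{(1,m)}`, which is therefore `χ(2n + d) q^{n(n+d)/15}`. The equations then come from the
antiperiodicity `χ^{(1,m)}(k + 15) = -χ^{(1,5-m)}(k)`: if `2e + d = d' + 15` and `e(e + d) = 15c`,
the coefficients of `xⁿ`, `n ≥ e`, of `H^{(1,m)}` and of `-q^c x^e H^{(1,5-m)}(qx)` agree, and the
finitely many coefficients below `xᵉ` are those of `1 - q^a x^b`.
-/

noncomputable section

/-- Formal power series in `x` (outer variable) over formal power series in `q`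
(inner variable); i.e. formal power series in `q` and `x`. -/
abbrev Rqx : Type := PowerSeries (PowerSeries ℚ)

/-- The variable `x`. -/
def Xx : Rqx := PowerSeries.X

/-- The variable `q`, viewed as a constant (in `x`) power series. -/
def Qc : Rqx := PowerSeries.C (R := PowerSeries ℚ) PowerSeries.X

/-- `|5 - 3m| = |nt - ms|` for `(s,t,n) = (3,5,1)`. -/
def dd (m : ℕ) : ℕ := (5 - 3 * (m : ℤ)).natAbs

/-- The period-30 function `χ₃₀^{(1,m)}`: value 1 at `k ≡ ±(5-3m)`, `-1` at
`k ≡ ±(5+3m) (mod 30)`, `0` otherwise. -/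
def chi30 (m k : ℕ) : ℤ :=
  if k % 30 = dd m ∨ k % 30 = (30 - dd m) % 30 then 1
  else if k % 30 = (5 + 3 * m) % 30 ∨ k % 30 = (30 - (5 + 3 * m) % 30) % 30 then -1
  else 0

/-- `H^{(1,m)}_{3,5}(x) = ∑_{k≥0} χ₃₀^{(1,m)}(k) q^{(k²-(5-3m)²)/60} x^{(k-|5-3m|)/2}`. -/
def H35 (m : ℕ) : Rqx :=
  ∑' k : ℕ, (chi30 m k : Rqx) * Qc ^ ((k ^ 2 - dd m ^ 2) / 60) * Xx ^ ((k - dd m) / 2)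

open PowerSeries

lemma isEmbedding_coeff {R : Type*} [Semiring R] [TopologicalSpace R] :
    Topology.IsEmbedding fun (f : PowerSeries R) (n : ℕ) => coeff n f :=
  ⟨⟨rfl⟩, fun _ _ h => ext fun n => congrFun h n⟩

instance {R : Type*} [Semiring R] [TopologicalSpace R] [T2Space R] :
    T2Space (PowerSeries R) :=
  isEmbedding_coeff.t2Space

lemma hasSum_of_hasSum_coeff {R : Type*} [Semiring R] [TopologicalSpace R]
    {f : ℕ → PowerSeries R} {S : PowerSeries R}
    (h : ∀ n, HasSum (fun k => coeff n (f k)) (coeff n S)) : HasSum f S := by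
  rw [HasSum, isEmbedding_coeff.isInducing.tendsto_nhds_iff, tendsto_pi_nhds]
  intro n
  simpa [Function.comp_def, map_sum, HasSum] using h n

lemma Qc_pow (a : ℕ) : Qc ^ a = C (X ^ a) := by
  rw [Qc, map_pow]

lemma intCast_mul_Qc_pow_mul_Xx_pow (c : ℤ) (a b : ℕ) :
    (c : Rqx) * Qc ^ a * Xx ^ b = C ((c : PowerSeries ℚ) * X ^ a) * X ^ b := by
  rw [Qc_pow, Xx, map_mul, map_intCast]

lemma coeff_Qc_pow_mul_Xx_pow (a b n : ℕ) :
    coeff n (Qc ^ a * Xx ^ b) = if n = b then X ^ a else 0 := by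
  rw [Qc_pow, Xx, coeff_C_mul_X_pow]

lemma coeff_Qc_pow_mul_Xx_pow_mul (a b n : ℕ) (f : Rqx) :
    coeff n (Qc ^ a * Xx ^ b * f) = if b ≤ n then X ^ a * coeff (n - b) f else 0 := by
  rw [Qc_pow, Xx, mul_right_comm, coeff_mul_X_pow']
  split_ifs <;> simp only [coeff_C_mul]

lemma chi30_ne_zero {m k : ℕ} (hm : m ≤ 5) (h : chi30 m k ≠ 0) :
    k % 2 = dd m % 2 ∧ dd m ≤ k := by
  unfold chi30 at h
  interval_cases m <;> simp only [dd] at h ⊢ <;> split_ifs at h <;> omega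

lemma chi30_add_fifteen {m : ℕ} (hm1 : 1 ≤ m) (hm4 : m ≤ 4) (k : ℕ) :
    chi30 m (k + 15) = -chi30 (5 - m) k := by
  have hperiod : ∀ m k, chi30 m k = chi30 m (k % 30) := by
    simp only [chi30, Nat.mod_mod, implies_true]
  rw [hperiod m, hperiod (5 - m), show (k + 15) % 30 = (k % 30 + 15) % 30 by omega]
  have hr := Nat.mod_lt k (show 30 > 0 by norm_num)
  generalize k % 30 = r at hr ⊢
  revert r
  interval_cases m <;> decide

lemma sq_sub_sq_div_sixty (n d : ℕ) : ((2 * n + d) ^ 2 - d ^ 2) / 60 = n * (n + d) / 15 := by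
  rw [show (2 * n + d) ^ 2 - d ^ 2 = 4 * (n * (n + d)) by
      rw [show (2 * n + d) ^ 2 = 4 * (n * (n + d)) + d ^ 2 by ring, Nat.add_sub_cancel],
    show 60 = 4 * 15 by rfl, Nat.mul_div_mul_left _ _ (by norm_num)]

lemma coeff_H35 {m : ℕ} (hm : m ≤ 5) (n : ℕ) :
    coeff n (H35 m) = (chi30 m (2 * n + dd m) : PowerSeries ℚ) * X ^ (n * (n + dd m) / 15) := by
  set d := dd m
  set f : ℕ → Rqx := fun k => (chi30 m k : Rqx) * Qc ^ ((k ^ 2 - d ^ 2) / 60) * Xx ^ ((k - d) / 2)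
    with hf
  have hcoeff : ∀ k j, coeff j (f k)
      = if j = (k - d) / 2 then (chi30 m k : PowerSeries ℚ) * X ^ ((k ^ 2 - d ^ 2) / 60) else 0 :=
    fun k j => by simp only [hf]; rw [intCast_mul_Qc_pow_mul_Xx_pow, coeff_C_mul_X_pow]
  have hsum :
      HasSum f (mk fun j => (chi30 m (2 * j + d) : PowerSeries ℚ) * X ^ (j * (j + d) / 15)) := by
    refine hasSum_of_hasSum_coeff fun j => ?_
    have hcentre := hcoeff (2 * j + d) j
    rw [if_pos (by omega), sq_sub_sq_div_sixty] at hcentre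
    rw [coeff_mk, ← hcentre]
    refine hasSum_single (f := fun k => coeff j (f k)) _ fun k hk => ?_
    rw [hcoeff, ite_eq_right_iff]
    intro hj
    by_cases hc : chi30 m k = 0
    · simp [hc]
    · obtain ⟨hpar, hle⟩ := chi30_ne_zero hm hc
      omega
  rw [H35, hsum.tsum_eq, coeff_mk]

lemma mul_add_div_fifteen_of_shift {t e d d' c : ℕ} (hshift : 2 * e + d = d' + 15)
    (hc : e * (e + d) = 15 * c) : (t + e) * (t + e + d) / 15 = c + t + t * (t + d') / 15 := by
  have h : (t + e) * (t + e + d) = t * (t + d') + 15 * (c + t) :=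
    calc (t + e) * (t + e + d) = t * t + t * (2 * e + d) + e * (e + d) := by ring
      _ = t * (t + d') + 15 * (c + t) := by rw [hshift, hc]; ring
  rw [h, Nat.add_mul_div_left _ _ (by norm_num)]
  ring

theorem H35_eq_sub_sub_rescale {m a b c e : ℕ} (hm1 : 1 ≤ m) (hm4 : m ≤ 4)
    (hshift : 2 * e + dd m = dd (5 - m) + 15) (hc : e * (e + dd m) = 15 * c)
    (ha : b * (b + dd m) = 15 * a) (hb : 0 < b) (hbe : b < e)
    (hhead : ∀ n < e, chi30 m (2 * n + dd m) = if n = 0 then 1 else if n = b then -1 else 0) :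
    H35 m = 1 - Qc ^ a * Xx ^ b - Qc ^ c * Xx ^ e * rescale X (H35 (5 - m)) := by
  refine ext fun n => ?_
  rw [coeff_H35 (by omega), map_sub, map_sub, coeff_one, coeff_Qc_pow_mul_Xx_pow,
    coeff_Qc_pow_mul_Xx_pow_mul, coeff_rescale, coeff_H35 (by omega)]
  rcases lt_or_ge n e with hn | hn
  · rw [hhead n hn, if_neg (show ¬e ≤ n by omega)]
    split_ifs with h0 hnb hnb
    · omega
    · simp [h0]
    · simp [hnb, ha]
    · simp
  · obtain ⟨t, rfl⟩ := Nat.exists_eq_add_of_le' hn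
    rw [if_neg (by omega), if_neg (by omega), if_pos hn,
      show 2 * (t + e) + dd m = 2 * t + dd (5 - m) + 15 by omega, chi30_add_fifteen hm1 hm4,
      add_tsub_cancel_right, mul_add_div_fifteen_of_shift hshift hc]
    push_cast
    ring

/-- The $q$-difference equations for `H^{(1,m)}_{3,5}`:
`H^{(1,4)}(x) = 1 - q²x³ - q⁴x⁵ H^{(1,1)}(qx)`,
`H^{(1,3)}(x) = 1 - q³x⁵ - q⁴x⁶ H^{(1,2)}(qx)`,
`H^{(1,2)}(x) = 1 - q²x⁵ - q⁶x⁹ H^{(1,3)}(qx)`,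
`H^{(1,1)}(x) = 1 - qx³ - q⁸x¹⁰ H^{(1,4)}(qx)`,
where substituting `qx` for `x` is `PowerSeries.rescale q`. -/
theorem H35_q_difference :
    H35 4 = 1 - Qc ^ 2 * Xx ^ 3 -
        Qc ^ 4 * Xx ^ 5 * PowerSeries.rescale (PowerSeries.X : PowerSeries ℚ) (H35 1) ∧
      H35 3 = 1 - Qc ^ 3 * Xx ^ 5 -
        Qc ^ 4 * Xx ^ 6 * PowerSeries.rescale (PowerSeries.X : PowerSeries ℚ) (H35 2) ∧
      H35 2 = 1 - Qc ^ 2 * Xx ^ 5 -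
        Qc ^ 6 * Xx ^ 9 * PowerSeries.rescale (PowerSeries.X : PowerSeries ℚ) (H35 3) ∧
      H35 1 = 1 - Qc * Xx ^ 3 -
        Qc ^ 8 * Xx ^ 10 * PowerSeries.rescale (PowerSeries.X : PowerSeries ℚ) (H35 4) := by
  refine ⟨?_, ?_, ?_, ?_⟩
  iterate 3
    exact H35_eq_sub_sub_rescale (by decide) (by decide) (by decide) (by decide) (by decide)
      (by decide) (by decide) (by decide)
  simpa only [pow_one] using H35_eq_sub_sub_rescale (m := 1) (a := 1) (b := 3) (c := 8) (e := 10)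
    (by decide) (by decide) (by decide) (by decide) (by decide) (by decide) (by decide) (by decide)
end
end
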